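/- Fix N ≥ 1. Let A_{ij} : P → ℝ and B_{jα} : Q → ℝ be smooth functions on convex open sets P, Q ⊆ ℝ^N (coordinates u and v respectively), with the matrices (A_{ij}(u)) and (B_{jα}(v)) invertible at every point, and suppose e_{iα}(u,v) = Σ_j A_{ij}(u)·B_{jα}(v) satisfies the equations (E1) ∂e_{jα}/∂uᵢ = ∂e_{iα}/∂u_j for all i,j,α, and (E2) Σ_α (e_{iα} · ∂e_{jβ}/∂v_α − e_{jα} · ∂e_{iβ}/∂v_α) = 0 for all i,j,β. Then: (1) there exist smooth functions θ¹₁, …, θ¹_N : P → ℝ with A_{ij} = ∂θ¹_j/∂uᵢ on P, and θ¹ = (θ¹₁,…,θ¹_N) is a local diffeomorphism at every point of P; (2) for every point q ∈ Q there exist an open neighborhood Q' ⊆ Q of q and a smooth map θ² : Q' → ℝ^N which is a diffeomorphism onto its (open) image such that Σ_α B_{jα}(v) · ∂θ²_β/∂v_α (v) = δ_{jβ} for all v ∈ Q' and all j, β (i.e., (B_{jα}) is the inverse Jacobian matrix of θ²). -/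

import Mathlib

/-- Partial derivative `∂f/∂ξᵢ` of a function of one vector variable. -/
noncomputable def pderiv' {N : ℕ} (i : Fin N) (f : (Fin N → ℝ) → ℝ) (p : Fin N → ℝ) : ℝ :=
  fderiv ℝ f p (fun l => if l = i then 1 else 0)

/-- Partial derivative `∂f/∂uᵢ` in the first factor of `ℝ^N × ℝ^N`. -/
noncomputable def dU2 {N : ℕ} (i : Fin N)
    (f : (Fin N → ℝ) × (Fin N → ℝ) → ℝ) (p : (Fin N → ℝ) × (Fin N → ℝ)) : ℝ :=
  fderiv ℝ f p ((fun l => if l = i then 1 else 0), 0)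

/-- Partial derivative `∂f/∂v_α` in the second factor of `ℝ^N × ℝ^N`. -/
noncomputable def dV2 {N : ℕ} (α : Fin N)
    (f : (Fin N → ℝ) × (Fin N → ℝ) → ℝ) (p : (Fin N → ℝ) × (Fin N → ℝ)) : ℝ :=
  fderiv ℝ f p (0, (fun l => if l = α then 1 else 0))

/-- The reducible matrix `e_{iα}(u,v) = Σⱼ A_{ij}(u) B_{jα}(v)`. -/
noncomputable def eRed {N : ℕ} (A B : Fin N → Fin N → (Fin N → ℝ) → ℝ)
    (i α : Fin N) (p : (Fin N → ℝ) × (Fin N → ℝ)) : ℝ :=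
  ∑ j, A i j p.1 * B j α p.2

/-!
(E1) is `Σ_k (∂ᵢA_{jk} - ∂ⱼA_{ik}) B_{kα} = 0`, so by invertibility of `B` the 1-forms
`Σᵢ A_{ij} duᵢ` are closed, hence exact on the convex set `P` (Poincaré lemma): `A` is the
Jacobian matrix of some `θ¹`. (E2) is `A (H - Hᵀ) Aᵀ = 0` with `H_{kl} = X_k(B_{lβ})` for the
vector fields `X_k = Σ_α B_{kα} ∂/∂v_α`, so the `X_k` commute. The coframe dual to a commuting
frame is closed, and it is given by the rows of `B⁻¹`; so `B⁻¹` is the Jacobian matrix of some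
`θ²` on `Q`. Both Jacobians are invertible and the inverse function theorem gives the local
diffeomorphisms.
-/

open scoped ContDiff Matrix

section Bilinear

variable {ι F : Type*} [Fintype ι] [DecidableEq ι] [NormedAddCommGroup F] [NormedSpace ℝ F]

theorem Matrix.sum_vecMul_nonsing_inv_smul_row {X : Matrix ι ι ℝ} (hX : IsUnit X) (x : ι → ℝ) :
    ∑ p, (x ᵥ* X⁻¹) p • X p = x := by
  have hx : (x ᵥ* X⁻¹) ᵥ* X = x := by
    rw [Matrix.vecMul_vecMul, Matrix.nonsing_inv_mul _ ((Matrix.isUnit_iff_isUnit_det X).1 hX),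
      Matrix.vecMul_one]
  conv_rhs => rw [← hx]
  ext j
  simp [Matrix.vecMul, dotProduct]

theorem ContinuousLinearMap.apply_apply_comm_of_rows
    (Ω : (ι → ℝ) →L[ℝ] (ι → ℝ) →L[ℝ] F) {X : Matrix ι ι ℝ} (hX : IsUnit X)
    (h : ∀ p q, Ω (X p) (X q) = Ω (X q) (X p)) (x y : ι → ℝ) : Ω x y = Ω y x := by
  rw [← Matrix.sum_vecMul_nonsing_inv_smul_row hX x, ← Matrix.sum_vecMul_nonsing_inv_smul_row hX y]
  simp only [map_sum, map_smul, sum_apply, smul_apply, Finset.smul_sum]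
  rw [Finset.sum_comm]
  refine Finset.sum_congr rfl fun q _ => Finset.sum_congr rfl fun p _ => ?_
  rw [h, smul_comm]

end Bilinear

section LinearCombination

variable {ι F : Type*} [Fintype ι] [NormedAddCommGroup F] [NormedSpace ℝ F]

def linearCombinationCLM (a : ι → F) : (ι → ℝ) →L[ℝ] F :=
  ∑ i, (ContinuousLinearMap.proj i).smulRight (a i)

@[simp]
theorem linearCombinationCLM_apply (a : ι → F) (h : ι → ℝ) :
    linearCombinationCLM a h = ∑ i, h i • a i := by
  simp [linearCombinationCLM]

variable {E : Type*} [NormedAddCommGroup E] [NormedSpace ℝ E] {a : ι → E → F}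

theorem ContDiffOn.linearCombinationCLM {n : WithTop ℕ∞} {s : Set E}
    (ha : ∀ i, ContDiffOn ℝ n (a i) s) :
    ContDiffOn ℝ n (fun w => linearCombinationCLM fun i => a i w) s :=
  ContDiffOn.sum fun i _ =>
    (ContinuousLinearMap.smulRightL ℝ (ι → ℝ) F (.proj i)).contDiff.comp_contDiffOn (ha i)

theorem fderiv_linearCombinationCLM_apply_apply {u : E} (ha : ∀ i, DifferentiableAt ℝ (a i) u)
    (x : E) (y : ι → ℝ) :
    fderiv ℝ (fun w => linearCombinationCLM fun i => a i w) u x y =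
      ∑ i, y i • fderiv ℝ (a i) u x := by
  have hD : HasFDerivAt (fun w => linearCombinationCLM fun i => a i w)
      (∑ i, (ContinuousLinearMap.smulRightL ℝ (ι → ℝ) F (.proj i)).comp (fderiv ℝ (a i) u)) u :=
    HasFDerivAt.fun_sum fun i _ =>
      (ContinuousLinearMap.smulRightL ℝ (ι → ℝ) F (.proj i)).hasFDerivAt.comp u (ha i).hasFDerivAt
  simp [hD.fderiv]

end LinearCombination

section Potential

variable {E F : Type*} [NormedAddCommGroup E] [NormedSpace ℝ E]
  [NormedAddCommGroup F] [NormedSpace ℝ F] [CompleteSpace F]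

theorem Convex.exists_contDiffOn_forall_hasFDerivAt_of_fderiv_symmetric {P : Set E}
    (hc : Convex ℝ P) (hP : IsOpen P) {η : E → E →L[ℝ] F} (hη : ContDiffOn ℝ ∞ η P)
    (hsymm : ∀ u ∈ P, ∀ x y, fderiv ℝ η u x y = fderiv ℝ η u y x) :
    ∃ θ : E → F, ContDiffOn ℝ ∞ θ P ∧ ∀ u ∈ P, HasFDerivAt θ (η u) u := by
  obtain ⟨θ, hθ⟩ :=
    hc.exists_forall_hasFDerivAt_of_fderiv_symmetric hP (hη.differentiableOn (by simp)) hsymm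
  refine ⟨θ, (contDiffOn_infty_iff_fderiv_of_isOpen hP).2 ⟨?_, ?_⟩, hθ⟩
  · exact fun u hu => (hθ u hu).differentiableAt.differentiableWithinAt
  · exact hη.congr fun u hu => (hθ u hu).fderiv

variable {ι : Type*} [Fintype ι] [DecidableEq ι]

/-- `hsymm` says `dη(X_p, X_q) = dη(X_q, X_p)` for the 1-form `η u = Σᵢ aᵢ(u) dxᵢ`, where `X_p`
is the `p`-th row of `X u`. -/
theorem Convex.exists_contDiffOn_forall_hasFDerivAt_linearCombinationCLM {P : Set (ι → ℝ)}
    (hc : Convex ℝ P) (hP : IsOpen P) {a : ι → (ι → ℝ) → F} (ha : ∀ i, ContDiffOn ℝ ∞ (a i) P)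
    (X : (ι → ℝ) → Matrix ι ι ℝ) (hX : ∀ u ∈ P, IsUnit (X u))
    (hsymm : ∀ u ∈ P, ∀ p q,
      ∑ i, X u q i • fderiv ℝ (a i) u (X u p) = ∑ i, X u p i • fderiv ℝ (a i) u (X u q)) :
    ∃ θ : (ι → ℝ) → F, ContDiffOn ℝ ∞ θ P ∧
      ∀ u ∈ P, HasFDerivAt θ (linearCombinationCLM fun i => a i u) u := by
  refine hc.exists_contDiffOn_forall_hasFDerivAt_of_fderiv_symmetric hP
    (.linearCombinationCLM ha) fun u hu => ?_
  have hdiff i : DifferentiableAt ℝ (a i) u :=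
    ((ha i).differentiableOn (by simp)).differentiableAt (hP.mem_nhds hu)
  refine ContinuousLinearMap.apply_apply_comm_of_rows
    (fderiv ℝ (fun w => linearCombinationCLM fun i => a i w) u) (hX u hu) fun p q => ?_
  simpa only [fderiv_linearCombinationCLM_apply_apply hdiff] using hsymm u hu p q

theorem Convex.exists_contDiffOn_forall_hasFDerivAt_linearCombinationCLM_of_single
    {P : Set (ι → ℝ)} (hc : Convex ℝ P) (hP : IsOpen P) {a : ι → (ι → ℝ) → F}
    (ha : ∀ i, ContDiffOn ℝ ∞ (a i) P)
    (hsymm : ∀ u ∈ P, ∀ i k, fderiv ℝ (a i) u (Pi.single k 1) = fderiv ℝ (a k) u (Pi.single i 1)) :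
    ∃ θ : (ι → ℝ) → F, ContDiffOn ℝ ∞ θ P ∧
      ∀ u ∈ P, HasFDerivAt θ (linearCombinationCLM fun i => a i u) u :=
  hc.exists_contDiffOn_forall_hasFDerivAt_linearCombinationCLM hP ha (fun _ => 1)
    (fun _ _ => isUnit_one) fun u hu p q => by
      have hrow k : (1 : Matrix ι ι ℝ) k = Pi.single k 1 := funext fun _ => Matrix.one_eq_pi_single
      simpa [hrow, Pi.single_apply] using hsymm u hu q p

end Potential

section Matrix

variable {ι : Type*} [Fintype ι] [DecidableEq ι]

theorem Matrix.IsSymm.of_mul_mul_transpose {R : Type*} [CommRing R] {X S : Matrix ι ι R}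
    (hX : IsUnit X) (h : (X * S * Xᵀ).IsSymm) : S.IsSymm := by
  rw [Matrix.IsSymm, Matrix.transpose_mul, Matrix.transpose_mul, Matrix.transpose_transpose,
    ← Matrix.mul_assoc] at h
  exact hX.mul_left_cancel ((Matrix.isUnit_transpose X).2 hX |>.mul_right_cancel h)

theorem HasFDerivAt.exists_continuousLinearEquiv_of_isUnit {θ : (ι → ℝ) → ι → ℝ}
    {M : Matrix ι ι ℝ} {u : ι → ℝ} (h : HasFDerivAt θ (linearCombinationCLM fun i => M i) u)
    (hM : IsUnit M) : ∃ e : (ι → ℝ) ≃L[ℝ] (ι → ℝ), HasFDerivAt θ (e : (ι → ℝ) →L[ℝ] ι → ℝ) u := by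
  have hdet := (Matrix.isUnit_iff_isUnit_det M).1 hM
  let e : (ι → ℝ) ≃ₗ[ℝ] (ι → ℝ) := .ofLinearMap M.vecMulLinear M⁻¹.vecMulLinear
    (LinearMap.ext fun x => by simp [Matrix.vecMul_vecMul, Matrix.nonsing_inv_mul _ hdet])
    (LinearMap.ext fun x => by simp [Matrix.vecMul_vecMul, Matrix.mul_nonsing_inv _ hdet])
  have he : (e.toContinuousLinearEquiv : (ι → ℝ) →L[ℝ] ι → ℝ) =
      linearCombinationCLM fun i => M i := by
    ext x j
    simp [e, Matrix.vecMul, dotProduct]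
  exact ⟨e.toContinuousLinearEquiv, he ▸ h⟩

variable {𝕜 E : Type*} [NontriviallyNormedField 𝕜] [NormedAddCommGroup E] [NormedSpace 𝕜 E]
  {M : E → Matrix ι ι 𝕜} {s : Set E} {n : WithTop ℕ∞}

theorem ContDiffOn.matrix_det (hM : ∀ i j, ContDiffOn 𝕜 n (fun v => M v i j) s) :
    ContDiffOn 𝕜 n (fun v => (M v).det) s := by
  simp only [Matrix.det_apply']
  exact .sum fun σ _ => contDiffOn_const.mul (contDiffOn_prod fun i _ => hM (σ i) i)

theorem ContDiffOn.matrix_inv_apply [CompleteSpace 𝕜]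
    (hM : ∀ i j, ContDiffOn 𝕜 n (fun v => M v i j) s) (hunit : ∀ v ∈ s, IsUnit (M v)) (i j : ι) :
    ContDiffOn 𝕜 n (fun v => (M v)⁻¹ i j) s := by
  have hdet : ContDiffOn 𝕜 n (fun v => (M v).det) s := .matrix_det hM
  have hadj : ContDiffOn 𝕜 n (fun v => (M v).adjugate i j) s := by
    simp only [Matrix.adjugate_apply]
    refine .matrix_det fun k l => ?_
    by_cases hk : k = j
    · subst hk
      simpa only [Matrix.updateRow_self] using contDiffOn_const
    · simpa only [Matrix.updateRow_ne hk] using hM k l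
  simp only [Matrix.inv_def, Matrix.smul_apply, Ring.inverse_eq_inv', smul_eq_mul]
  exact (hdet.inv fun v hv => ((Matrix.isUnit_iff_isUnit_det _).1 (hunit v hv)).ne_zero).mul hadj

end Matrix

section InverseFunction

variable {E F : Type*} [NormedAddCommGroup E] [NormedSpace ℝ E] [CompleteSpace E]
  [NormedAddCommGroup F] [NormedSpace ℝ F]

theorem exists_isOpen_injOn_contDiffOn_leftInverse {n : WithTop ℕ∞} (hn : n ≠ 0) {P : Set E}
    (hP : IsOpen P) {f : E → F} (hf : ContDiffOn ℝ n f P)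
    (hf' : ∀ u ∈ P, ∃ e : E ≃L[ℝ] F, HasFDerivAt f (e : E →L[ℝ] F) u) :
    ∀ u₀ ∈ P, ∃ V : Set E, IsOpen V ∧ u₀ ∈ V ∧ V ⊆ P ∧ Set.InjOn f V ∧ IsOpen (f '' V) ∧
      ∃ ψ : F → E, ContDiffOn ℝ n ψ (f '' V) ∧ ∀ u ∈ V, ψ (f u) = u := by
  intro u₀ hu₀
  obtain ⟨e₀, he₀⟩ := hf' u₀ hu₀
  have hfu₀ := hf.contDiffAt (hP.mem_nhds hu₀)
  set Φ := hfu₀.toOpenPartialHomeomorph f he₀ hn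
  have hΦ : (Φ : E → F) = f := rfl
  refine ⟨Φ.source ∩ P, Φ.open_source.inter hP,
    ⟨hfu₀.mem_toOpenPartialHomeomorph_source he₀ hn, hu₀⟩, Set.inter_subset_right,
    hΦ ▸ Φ.injOn.mono Set.inter_subset_left,
    hΦ ▸ Φ.isOpen_image_of_subset_source (Φ.open_source.inter hP) Set.inter_subset_left,
    Φ.symm, ?_, fun u hu => Φ.left_inv hu.1⟩
  rintro _ ⟨u, hu, rfl⟩
  obtain ⟨e, he⟩ := hf' u hu.2
  rw [← Φ.left_inv hu.1] at he
  refine (Φ.contDiffAt_symm (Φ.map_source hu.1) he ?_).contDiffWithinAt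
  rw [Φ.left_inv hu.1]
  exact hf.contDiffAt (hP.mem_nhds hu.2)

end InverseFunction

theorem sum_smul_fderiv_eq_neg_sum_fderiv_smul {ι E F : Type*} [Fintype ι]
    [NormedAddCommGroup E] [NormedSpace ℝ E] [NormedAddCommGroup F] [NormedSpace ℝ F]
    {f : ι → E → ℝ} {g : ι → E → F} {v : E} {c : F} (hf : ∀ i, DifferentiableAt ℝ (f i) v)
    (hg : ∀ i, DifferentiableAt ℝ (g i) v)
    (hc : (fun w => ∑ i, f i w • g i w) =ᶠ[nhds v] fun _ => c) (h : E) :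
    ∑ i, f i v • fderiv ℝ (g i) v h = -∑ i, fderiv ℝ (f i) v h • g i v := by
  have hD := HasFDerivAt.fun_sum (u := Finset.univ) fun i _ =>
    (hf i).hasFDerivAt.smul (hg i).hasFDerivAt
  have h0 := congrArg (· h) (hD.fderiv.symm.trans (hc.fderiv_eq.trans (fderiv_const_apply c)))
  simp only [sum_apply, add_apply, smul_apply, ContinuousLinearMap.smulRight_apply,
    zero_apply, Finset.sum_add_distrib] at h0
  exact eq_neg_of_add_eq_zero_left h0

section Partials

variable {N : ℕ}

theorem pderiv'_eq_fderiv_single (i : Fin N) (f : (Fin N → ℝ) → ℝ) (p : Fin N → ℝ) :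
    pderiv' i f p = fderiv ℝ f p (Pi.single i 1) := by
  unfold pderiv'
  congr 1
  ext l
  simp [Pi.single_apply]

theorem fderiv_apply_eq_sum_pderiv' (f : (Fin N → ℝ) → ℝ) (p x : Fin N → ℝ) :
    fderiv ℝ f p x = ∑ α, x α * pderiv' α f p := by
  conv_lhs => rw [pi_eq_sum_univ x]
  simp [pderiv', eq_comm]

theorem pderiv'_apply_eq_of_hasFDerivAt {θ : (Fin N → ℝ) → Fin N → ℝ}
    {M : Matrix (Fin N) (Fin N) ℝ} {u : Fin N → ℝ}
    (h : HasFDerivAt θ (linearCombinationCLM fun i => M i) u) (i j : Fin N) :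
    pderiv' i (fun w => θ w j) u = M i j := by
  simp [pderiv', (hasFDerivAt_pi'.1 h j).fderiv, ite_apply]

variable {A B : Fin N → Fin N → (Fin N → ℝ) → ℝ} {u v : Fin N → ℝ}

theorem fderiv_eRed_apply {j α : Fin N} (hA : ∀ k, DifferentiableAt ℝ (A j k) u)
    (hB : ∀ k, DifferentiableAt ℝ (B k α) v) (x y : Fin N → ℝ) :
    fderiv ℝ (eRed A B j α) (u, v) (x, y) =
      ∑ k, (fderiv ℝ (A j k) u x * B k α v + A j k u * fderiv ℝ (B k α) v y) := by
  have hD : HasFDerivAt (eRed A B j α) _ (u, v) := HasFDerivAt.fun_sum fun k _ =>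
    ((hA k).hasFDerivAt.comp (u, v) hasFDerivAt_fst).mul
      ((hB k).hasFDerivAt.comp (u, v) hasFDerivAt_snd)
  simp only [hD.fderiv]
  simp [add_comm, mul_comm]

theorem dU2_eRed {j α : Fin N} (hA : ∀ k, DifferentiableAt ℝ (A j k) u)
    (hB : ∀ k, DifferentiableAt ℝ (B k α) v) (i : Fin N) :
    dU2 i (eRed A B j α) (u, v) = ∑ k, pderiv' i (A j k) u * B k α v := by
  simp [dU2, fderiv_eRed_apply hA hB, pderiv']

theorem dV2_eRed {j β : Fin N} (hA : ∀ k, DifferentiableAt ℝ (A j k) u)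
    (hB : ∀ k, DifferentiableAt ℝ (B k β) v) (α : Fin N) :
    dV2 α (eRed A B j β) (u, v) = ∑ k, A j k u * pderiv' α (B k β) v := by
  simp [dV2, fderiv_eRed_apply hA hB, pderiv']

end Partials

section Integrability

variable {N : ℕ} {A B : Fin N → Fin N → (Fin N → ℝ) → ℝ} {u v : Fin N → ℝ}

theorem fderiv_row_comm_of_dU2_eRed_comm (hA : ∀ i j, DifferentiableAt ℝ (A i j) u)
    (hB : ∀ j α, DifferentiableAt ℝ (B j α) v) (hBinv : IsUnit (Matrix.of fun j α => B j α v))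
    (hE1 : ∀ i j α, dU2 i (eRed A B j α) (u, v) = dU2 j (eRed A B i α) (u, v)) (i j : Fin N) :
    fderiv ℝ (fun w k => A j k w) u (Pi.single i 1) =
      fderiv ℝ (fun w k => A i k w) u (Pi.single j 1) :=
  Matrix.vecMul_injective_of_isUnit hBinv <| funext fun α => by
    simpa [fderiv_pi (hA _), dU2_eRed (hA _) (hB · α), pderiv'_eq_fderiv_single, Matrix.vecMul,
      dotProduct] using hE1 i j α

theorem fderiv_apply_row_comm_of_dV2_eRed (hA : ∀ i j, DifferentiableAt ℝ (A i j) u)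
    (hB : ∀ j α, DifferentiableAt ℝ (B j α) v) (hAinv : IsUnit (Matrix.of fun i j => A i j u))
    (hE2 : ∀ i j β, ∑ α, (eRed A B i α (u, v) * dV2 α (eRed A B j β) (u, v) -
      eRed A B j α (u, v) * dV2 α (eRed A B i β) (u, v)) = 0) (p q β : Fin N) :
    fderiv ℝ (B q β) v (fun α => B p α v) = fderiv ℝ (B p β) v (fun α => B q α v) := by
  set Am := Matrix.of fun i j => A i j u
  set Bm := Matrix.of fun j α => B j α v
  set D := Matrix.of fun α l => pderiv' α (B l β) v
  have hentry i j : ∑ α, eRed A B i α (u, v) * dV2 α (eRed A B j β) (u, v) =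
      (Am * (Bm * D) * Amᵀ) i j := by
    have hd α : dV2 α (eRed A B j β) (u, v) = (D * Amᵀ) α j := by
      simp [dV2_eRed (hA j) (hB · β), Matrix.mul_apply, D, Am, mul_comm]
    simp only [hd, Matrix.mul_assoc]
    rw [← Matrix.mul_assoc Am Bm, Matrix.mul_apply]
    rfl
  have hsymm : (Am * (Bm * D) * Amᵀ).IsSymm := Matrix.IsSymm.ext fun i j => by
    rw [← hentry, ← hentry, ← sub_eq_zero, ← Finset.sum_sub_distrib]
    exact hE2 j i β
  have := (Matrix.IsSymm.of_mul_mul_transpose hAinv hsymm).apply p q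
  simpa [fderiv_apply_eq_sum_pderiv', Matrix.mul_apply, Bm, D] using this.symm

theorem sum_smul_fderiv_inv_row_comm {Q : Set (Fin N → ℝ)} (hQ : IsOpen Q)
    (hB : ∀ j α, ContDiffOn ℝ ∞ (B j α) Q)
    (hBinv : ∀ v ∈ Q, IsUnit (Matrix.of fun j α => B j α v)) {v : Fin N → ℝ} (hv : v ∈ Q)
    (hC : ∀ p q α, fderiv ℝ (B q α) v (fun γ => B p γ v) = fderiv ℝ (B p α) v (fun γ => B q γ v))
    (p q : Fin N) :
    ∑ α, B q α v • fderiv ℝ (fun w => (Matrix.of fun j α => B j α w)⁻¹ α) v (fun γ => B p γ v) =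
      ∑ α, B p α v • fderiv ℝ (fun w => (Matrix.of fun j α => B j α w)⁻¹ α) v
        (fun γ => B q γ v) := by
  have hdiff {f : (Fin N → ℝ) → ℝ} (hf : ContDiffOn ℝ ∞ f Q) : DifferentiableAt ℝ f v :=
    (hf.differentiableOn (by simp)).differentiableAt (hQ.mem_nhds hv)
  have hinv α : DifferentiableAt ℝ (fun w => (Matrix.of fun j α => B j α w)⁻¹ α) v :=
    differentiableAt_pi.2 fun β => hdiff (.matrix_inv_apply (fun j α => hB j α) hBinv α β)
  have hconst r : (fun w => ∑ α, B r α w • (Matrix.of fun j α => B j α w)⁻¹ α) =ᶠ[nhds v]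
      fun _ => (1 : Matrix (Fin N) (Fin N) ℝ) r := by
    filter_upwards [hQ.mem_nhds hv] with w hw
    ext β
    have := congrFun (congrFun (Matrix.mul_nonsing_inv _
      ((Matrix.isUnit_iff_isUnit_det _).1 (hBinv w hw))) r) β
    simpa [Matrix.mul_apply] using this
  -- differentiating the rows of `B B⁻¹ = 1` moves the derivative onto `B`, where `hC` applies
  rw [sum_smul_fderiv_eq_neg_sum_fderiv_smul (fun α => hdiff (hB q α)) hinv (hconst q),
    sum_smul_fderiv_eq_neg_sum_fderiv_smul (fun α => hdiff (hB p α)) hinv (hconst p)]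
  simp only [hC p q]

end Integrability

theorem reducible_e_gives_new_marked_functions_general
    (N : ℕ)
    (P Q : Set (Fin N → ℝ))
    (hPopen : IsOpen P) (hPconv : Convex ℝ P) (hPne : P.Nonempty)
    (hQopen : IsOpen Q) (hQconv : Convex ℝ Q) (hQne : Q.Nonempty)
    (A B : Fin N → Fin N → (Fin N → ℝ) → ℝ)
    (hAsmooth : ∀ i j, ContDiffOn ℝ (⊤ : ℕ∞) (A i j) P)
    (hBsmooth : ∀ j α, ContDiffOn ℝ (⊤ : ℕ∞) (B j α) Q)
    (hAinv : ∀ u ∈ P, IsUnit (Matrix.of fun i j => A i j u))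
    (hBinv : ∀ v ∈ Q, IsUnit (Matrix.of fun j α => B j α v))
    (hE1 : ∀ i j α, ∀ p ∈ P ×ˢ Q, dU2 i (eRed A B j α) p = dU2 j (eRed A B i α) p)
    (hE2 : ∀ i j β, ∀ p ∈ P ×ˢ Q,
        ∑ α, (eRed A B i α p * dV2 α (eRed A B j β) p -
              eRed A B j α p * dV2 α (eRed A B i β) p) = 0) :
    (∃ θ : Fin N → (Fin N → ℝ) → ℝ,
        (∀ j, ContDiffOn ℝ (⊤ : ℕ∞) (θ j) P) ∧
        (∀ i j, ∀ u ∈ P, A i j u = pderiv' i (θ j) u) ∧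
        (∀ u₀ ∈ P, ∃ V : Set (Fin N → ℝ),
            IsOpen V ∧ u₀ ∈ V ∧ V ⊆ P ∧
            Set.InjOn (fun u j => θ j u) V ∧
            IsOpen ((fun u j => θ j u) '' V) ∧
            ∃ ψ : (Fin N → ℝ) → (Fin N → ℝ),
              ContDiffOn ℝ (⊤ : ℕ∞) ψ ((fun u j => θ j u) '' V) ∧
              ∀ u ∈ V, ψ (fun j => θ j u) = u)) ∧
    (∀ q ∈ Q, ∃ Q' : Set (Fin N → ℝ),
        IsOpen Q' ∧ q ∈ Q' ∧ Q' ⊆ Q ∧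
        ∃ θ₂ : (Fin N → ℝ) → (Fin N → ℝ),
          ContDiffOn ℝ (⊤ : ℕ∞) θ₂ Q' ∧
          Set.InjOn θ₂ Q' ∧
          IsOpen (θ₂ '' Q') ∧
          (∃ ψ : (Fin N → ℝ) → (Fin N → ℝ),
              ContDiffOn ℝ (⊤ : ℕ∞) ψ (θ₂ '' Q') ∧ ∀ v ∈ Q', ψ (θ₂ v) = v) ∧
          (∀ v ∈ Q', ∀ j β,
              ∑ α, B j α v * pderiv' α (fun w => θ₂ w β) v =
                if j = β then 1 else 0)) := by
  obtain ⟨u₀, hu₀⟩ := hPne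
  obtain ⟨v₀, hv₀⟩ := hQne
  have hAdiff {u} (hu : u ∈ P) i j : DifferentiableAt ℝ (A i j) u :=
    ((hAsmooth i j).differentiableOn (by simp)).differentiableAt (hPopen.mem_nhds hu)
  have hBdiff {v} (hv : v ∈ Q) j α : DifferentiableAt ℝ (B j α) v :=
    ((hBsmooth j α).differentiableOn (by simp)).differentiableAt (hQopen.mem_nhds hv)
  have hA_closed u (hu : u ∈ P) i k :=
    fderiv_row_comm_of_dU2_eRed_comm (hAdiff hu) (hBdiff hv₀) (hBinv v₀ hv₀)
      (fun i j α => hE1 i j α _ ⟨hu, hv₀⟩) k i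
  have hB_comm v (hv : v ∈ Q) :=
    fderiv_apply_row_comm_of_dV2_eRed (hAdiff hu₀) (hBdiff hv) (hAinv u₀ hu₀)
      (fun i j β => hE2 i j β _ ⟨hu₀, hv⟩)
  obtain ⟨θ, hθ, hθA⟩ :=
    hPconv.exists_contDiffOn_forall_hasFDerivAt_linearCombinationCLM_of_single hPopen
      (a := fun i u => (Matrix.of fun i j => A i j u) i) (fun i => contDiffOn_pi.2 (hAsmooth i))
      hA_closed
  obtain ⟨θ₂, hθ₂, hθ₂M⟩ := hQconv.exists_contDiffOn_forall_hasFDerivAt_linearCombinationCLM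
    hQopen (a := fun α v => (Matrix.of fun j α => B j α v)⁻¹ α)
    (fun α => contDiffOn_pi.2 (.matrix_inv_apply hBsmooth hBinv α))
    (fun v => Matrix.of fun j α => B j α v) hBinv
    fun v hv => sum_smul_fderiv_inv_row_comm hQopen hBsmooth hBinv hv (hB_comm v hv)
  refine ⟨⟨fun j u => θ u j, contDiffOn_pi.1 hθ,
    fun i j u hu => (pderiv'_apply_eq_of_hasFDerivAt (hθA u hu) i j).symm,
    exists_isOpen_injOn_contDiffOn_leftInverse (by simp) hPopen hθ
      fun u hu => (hθA u hu).exists_continuousLinearEquiv_of_isUnit (hAinv u hu)⟩,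
    fun q hq => ?_⟩
  obtain ⟨V, hVopen, hqV, hVQ, hinj, himg, hψ⟩ :=
    exists_isOpen_injOn_contDiffOn_leftInverse (by simp) hQopen hθ₂ (fun v hv =>
      (hθ₂M v hv).exists_continuousLinearEquiv_of_isUnit
        (Matrix.isUnit_nonsing_inv_iff.2 (hBinv v hv))) q hq
  refine ⟨V, hVopen, hqV, hVQ, θ₂, hθ₂.mono hVQ, hinj, himg, hψ, fun v hv j β => ?_⟩
  rw [← Matrix.one_apply, ← Matrix.mul_nonsing_inv _
    ((Matrix.isUnit_iff_isUnit_det _).1 (hBinv v (hVQ hv))), Matrix.mul_apply]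
  simp only [pderiv'_apply_eq_of_hasFDerivAt (hθ₂M v (hVQ hv))]
  rfl

/-- If a reducible matrix `e_{iα} = Σⱼ A_{ij}(u) B_{jα}(v)` (with smooth,
everywhere invertible factors on convex open sets `P`, `Q`) satisfies (E1) and (E2),
then (1) `A` is the Jacobian matrix of a map `θ¹` on `P` which is a local diffeomorphism
at every point, and (2) near every point of `Q` there is a diffeomorphism `θ₂` onto an
open set whose inverse Jacobian matrix is `B`: `Σ_α B_{jα} ∂θ₂_β/∂v_α = δ_{jβ}`. -/
theorem reducible_e_gives_new_marked_functions
    (N : ℕ) (hN : 1 ≤ N)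
    (P Q : Set (Fin N → ℝ))
    (hPopen : IsOpen P) (hPconv : Convex ℝ P) (hPne : P.Nonempty)
    (hQopen : IsOpen Q) (hQconv : Convex ℝ Q) (hQne : Q.Nonempty)
    (A B : Fin N → Fin N → (Fin N → ℝ) → ℝ)
    (hAsmooth : ∀ i j, ContDiffOn ℝ (⊤ : ℕ∞) (A i j) P)
    (hBsmooth : ∀ j α, ContDiffOn ℝ (⊤ : ℕ∞) (B j α) Q)
    (hAinv : ∀ u ∈ P, IsUnit (Matrix.of fun i j => A i j u))
    (hBinv : ∀ v ∈ Q, IsUnit (Matrix.of fun j α => B j α v))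
    (hE1 : ∀ i j α, ∀ p ∈ P ×ˢ Q, dU2 i (eRed A B j α) p = dU2 j (eRed A B i α) p)
    (hE2 : ∀ i j β, ∀ p ∈ P ×ˢ Q,
        ∑ α, (eRed A B i α p * dV2 α (eRed A B j β) p -
              eRed A B j α p * dV2 α (eRed A B i β) p) = 0) :
    (∃ θ : Fin N → (Fin N → ℝ) → ℝ,
        (∀ j, ContDiffOn ℝ (⊤ : ℕ∞) (θ j) P) ∧
        (∀ i j, ∀ u ∈ P, A i j u = pderiv' i (θ j) u) ∧
        (∀ u₀ ∈ P, ∃ V : Set (Fin N → ℝ),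
            IsOpen V ∧ u₀ ∈ V ∧ V ⊆ P ∧
            Set.InjOn (fun u j => θ j u) V ∧
            IsOpen ((fun u j => θ j u) '' V) ∧
            ∃ ψ : (Fin N → ℝ) → (Fin N → ℝ),
              ContDiffOn ℝ (⊤ : ℕ∞) ψ ((fun u j => θ j u) '' V) ∧
              ∀ u ∈ V, ψ (fun j => θ j u) = u)) ∧
    (∀ q ∈ Q, ∃ Q' : Set (Fin N → ℝ),
        IsOpen Q' ∧ q ∈ Q' ∧ Q' ⊆ Q ∧
        ∃ θ₂ : (Fin N → ℝ) → (Fin N → ℝ),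
          ContDiffOn ℝ (⊤ : ℕ∞) θ₂ Q' ∧
          Set.InjOn θ₂ Q' ∧
          IsOpen (θ₂ '' Q') ∧
          (∃ ψ : (Fin N → ℝ) → (Fin N → ℝ),
              ContDiffOn ℝ (⊤ : ℕ∞) ψ (θ₂ '' Q') ∧ ∀ v ∈ Q', ψ (θ₂ v) = v) ∧
          (∀ v ∈ Q', ∀ j β,
              ∑ α, B j α v * pderiv' α (fun w => θ₂ w β) v =
                if j = β then 1 else 0)) :=
  reducible_e_gives_new_marked_functions_general N P Q hPopen hPconv hPne hQopen hQconv hQne A B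
    hAsmooth hBsmooth hAinv hBinv hE1 hE2
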